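/- Let (X_i, Z_i, Y_i), i = 1,…,n, be an i.i.d. sample from the partially linear model, and let h : ℝ^{p₂} → ℝ be a measurable function such that (Y − h(Z))X is integrable. Then the statistic T = (1/n) Σ_{i≠j} (Y_i − h(Z_i))(Y_j − h(Z_j)) X_iᵀX_j (sum over ordered pairs i ≠ j) satisfies E[T] = (n−1) ‖Σ_X β + μ_h‖₂², where μ_h = E[(g(Z) − h(Z))X]. -/

import Mathlib

open MeasureTheory ProbabilityTheory Filter Topology Matrix

/-- For an i.i.d. sample `(X_i, Z_i, Y_i)`, `i = 1,…,n`, from the partially linear model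
`Y = Xᵀβ + g(Z) + ε` (with `ε ⫫ X`, `E ε = 0`) and a measurable function `h` with
`(Y − h(Z))X` integrable, the statistic
`T = (1/n) Σ_{i≠j} (Y_i − h(Z_i))(Y_j − h(Z_j)) X_iᵀX_j` (ordered pairs `i ≠ j`) satisfies
`E[T] = (n−1) ‖Σ_X β + μ_h‖₂²`, where `μ_h = E[(g(Z) − h(Z))X]`. -/
theorem statement7
    {Ω : Type} [MeasurableSpace Ω] (P : Measure Ω) [IsProbabilityMeasure P]
    (n p₁ p₂ : ℕ) (hn : 1 ≤ n)
    (X : Fin n → Ω → Fin p₁ → ℝ) (Z : Fin n → Ω → Fin p₂ → ℝ) (Y ε : Fin n → Ω → ℝ)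
    -- a fresh observation from the population
    (X₀ : Ω → Fin p₁ → ℝ) (Z₀ : Ω → Fin p₂ → ℝ) (Y₀ ε₀ : Ω → ℝ)
    (β : Fin p₁ → ℝ) (g h : (Fin p₂ → ℝ) → ℝ)
    -- measurability
    (hmX : ∀ i, Measurable (X i)) (hmZ : ∀ i, Measurable (Z i))
    (hmY : ∀ i, Measurable (Y i)) (hmε : ∀ i, Measurable (ε i))
    (hmX₀ : Measurable X₀) (hmZ₀ : Measurable Z₀) (hmY₀ : Measurable Y₀)
    (hmε₀ : Measurable ε₀) (hmg : Measurable g) (hmh : Measurable h)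
    -- the partially linear model
    (hmodel : ∀ i ω, Y i ω = (∑ a, X i ω a * β a) + g (Z i ω) + ε i ω)
    (hmodel₀ : ∀ ω, Y₀ ω = (∑ a, X₀ ω a * β a) + g (Z₀ ω) + ε₀ ω)
    -- i.i.d. sample
    (hiid : iIndepFun
      (fun (i : Fin n) ω => (X i ω, Z i ω, Y i ω, ε i ω)) P)
    (hid : ∀ i, IdentDistrib (fun ω => (X i ω, Z i ω, Y i ω, ε i ω))
      (fun ω => (X₀ ω, Z₀ ω, Y₀ ω, ε₀ ω)) P P)
    -- ε ⫫ X and E ε = 0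
    (hεX : IndepFun ε₀ X₀ P)
    (hEε : ∫ ω, ε₀ ω ∂P = 0)
    -- integrability of all quantities appearing
    (hIYX : ∀ a, Integrable (fun ω => (Y₀ ω - h (Z₀ ω)) * X₀ ω a) P)
    (hIXX : ∀ a b, Integrable (fun ω => X₀ ω a * X₀ ω b) P)
    (hIX : ∀ a, Integrable (fun ω => X₀ ω a) P)
    (hIε : Integrable ε₀ P)
    (hIgX : ∀ a, Integrable (fun ω => (g (Z₀ ω) - h (Z₀ ω)) * X₀ ω a) P)
    (hIpair : ∀ i j : Fin n, i ≠ j → Integrable (fun ω =>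
      (Y i ω - h (Z i ω)) * (Y j ω - h (Z j ω)) * ∑ a, X i ω a * X j ω a) P)
    -- Σ_X = E(XXᵀ) and μ_h = E[(g(Z) − h(Z))X]
    (S : Matrix (Fin p₁) (Fin p₁) ℝ)
    (hS : ∀ a b, S a b = ∫ ω, X₀ ω a * X₀ ω b ∂P)
    (μ : Fin p₁ → ℝ)
    (hμ : ∀ a, μ a = ∫ ω, (g (Z₀ ω) - h (Z₀ ω)) * X₀ ω a ∂P)
    -- the statistic T
    (T : Ω → ℝ)
    (hT : ∀ ω, T ω = (1 / (n : ℝ)) * ∑ i, ∑ j, if i = j then 0 else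
      (Y i ω - h (Z i ω)) * (Y j ω - h (Z j ω)) * ∑ a, X i ω a * X j ω a) :
    ∫ ω, T ω ∂P = ((n : ℝ) - 1) * ∑ a, (S.mulVec β a + μ a) ^ 2 := by
  classical
  -- the common mean vector
  set v : Fin p₁ → ℝ := fun a => ∫ ω, (Y₀ ω - h (Z₀ ω)) * X₀ ω a ∂P with hv
  -- measurable map extracting (y - h z) * x a from the tuple
  have hφm : ∀ a : Fin p₁, Measurable (fun p : (Fin p₁ → ℝ) × (Fin p₂ → ℝ) × ℝ × ℝ =>
      (p.2.2.1 - h p.2.1) * p.1 a) := fun a =>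
    ((measurable_fst.comp (measurable_snd.comp measurable_snd)).sub
      (hmh.comp (measurable_fst.comp measurable_snd))).mul
      ((measurable_pi_apply a).comp measurable_fst)
  -- identically distributed coordinates
  have hWid : ∀ (i : Fin n) (a : Fin p₁),
      IdentDistrib (fun ω => (Y i ω - h (Z i ω)) * X i ω a)
        (fun ω => (Y₀ ω - h (Z₀ ω)) * X₀ ω a) P P := fun i a =>
    (hid i).comp (hφm a)
  have hWint : ∀ (i : Fin n) (a : Fin p₁),
      Integrable (fun ω => (Y i ω - h (Z i ω)) * X i ω a) P := fun i a =>
    ((hWid i a).integrable_iff).mpr (hIYX a)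
  have hWE : ∀ (i : Fin n) (a : Fin p₁),
      ∫ ω, (Y i ω - h (Z i ω)) * X i ω a ∂P = v a := fun i a =>
    (hWid i a).integral_eq
  -- integrability of ε₀ * X₀ a
  have hIεX : ∀ a, Integrable (fun ω => ε₀ ω * X₀ ω a) P := by
    intro a
    have hsum : Integrable (fun ω => (∑ b, X₀ ω b * β b) * X₀ ω a) P := by
      have : (fun ω => (∑ b, X₀ ω b * β b) * X₀ ω a)
          = fun ω => ∑ b, β b * (X₀ ω b * X₀ ω a) := by
        funext ω; rw [Finset.sum_mul]; exact Finset.sum_congr rfl fun b _ => by ring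
      rw [this]
      exact integrable_finset_sum _ fun b _ => (hIXX b a).const_mul _
    have heq : (fun ω => ε₀ ω * X₀ ω a)
        = fun ω => (Y₀ ω - h (Z₀ ω)) * X₀ ω a - ((∑ b, X₀ ω b * β b) * X₀ ω a
          + (g (Z₀ ω) - h (Z₀ ω)) * X₀ ω a) := by
      funext ω; rw [hmodel₀ ω]; ring
    rw [heq]
    exact (hIYX a).sub (hsum.add (hIgX a))
  -- E[ε₀ X₀ a] = 0
  have hEεX : ∀ a, ∫ ω, ε₀ ω * X₀ ω a ∂P = 0 := by
    intro a
    have hind : IndepFun ε₀ (fun ω => X₀ ω a) P :=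
      hεX.comp measurable_id (measurable_pi_apply a)
    have := hind.integral_mul_eq_mul_integral hIε.aestronglyMeasurable (hIX a).aestronglyMeasurable
    simpa [hEε] using this
  -- the value of v
  have hva : ∀ a, v a = S.mulVec β a + μ a := by
    intro a
    have hsumI : ∀ b : Fin p₁, Integrable (fun ω => β b * (X₀ ω b * X₀ ω a)) P :=
      fun b => (hIXX b a).const_mul _
    have h1 : v a = ∫ ω, ((∑ b, β b * (X₀ ω b * X₀ ω a))
        + ((g (Z₀ ω) - h (Z₀ ω)) * X₀ ω a + ε₀ ω * X₀ ω a)) ∂P := by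
      rw [hv]
      refine integral_congr_ae (Filter.Eventually.of_forall fun ω => ?_)
      show (Y₀ ω - h (Z₀ ω)) * X₀ ω a = _
      have hsum_eq : (∑ b, X₀ ω b * β b) * X₀ ω a = ∑ b, β b * (X₀ ω b * X₀ ω a) := by
        rw [Finset.sum_mul]; exact Finset.sum_congr rfl fun b _ => by ring
      rw [hmodel₀ ω, sub_mul, add_mul, add_mul, hsum_eq]
      ring
    have hSsym : ∀ b : Fin p₁, ∫ ω, X₀ ω b * X₀ ω a ∂P = S a b := by
      intro b; rw [hS a b]
      exact integral_congr_ae (Filter.Eventually.of_forall fun ω => mul_comm _ _)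
    have hmv : S.mulVec β a = ∑ b, β b * S a b := by
      simp [Matrix.mulVec, dotProduct, mul_comm]
    have hge : Integrable (fun ω => (g (Z₀ ω) - h (Z₀ ω)) * X₀ ω a + ε₀ ω * X₀ ω a) P :=
      (hIgX a).add (hIεX a)
    rw [h1, integral_add (integrable_finset_sum _ fun b _ => hsumI b) hge,
      integral_finset_sum _ (fun b _ => hsumI b),
      integral_add (hIgX a) (hIεX a), hEεX a, ← hμ a, hmv]
    simp only [integral_const_mul, hSsym, add_zero]
  -- value of each cross term
  have hC : ∀ i j : Fin n, i ≠ j →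
      ∫ ω, (Y i ω - h (Z i ω)) * (Y j ω - h (Z j ω)) * ∑ a, X i ω a * X j ω a ∂P
        = ∑ a, v a * v a := by
    intro i j hij
    have hindep : ∀ a : Fin p₁, IndepFun (fun ω => (Y i ω - h (Z i ω)) * X i ω a)
        (fun ω => (Y j ω - h (Z j ω)) * X j ω a) P :=
      fun a => (hiid.indepFun hij).comp (hφm a) (hφm a)
    have heq : (fun ω => (Y i ω - h (Z i ω)) * (Y j ω - h (Z j ω)) * ∑ a, X i ω a * X j ω a)
        = fun ω => ∑ a, ((Y i ω - h (Z i ω)) * X i ω a) * ((Y j ω - h (Z j ω)) * X j ω a) := by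
      funext ω; rw [Finset.mul_sum]; exact Finset.sum_congr rfl fun a _ => by ring
    have hmulint : ∀ a : Fin p₁, Integrable (fun ω =>
        ((Y i ω - h (Z i ω)) * X i ω a) * ((Y j ω - h (Z j ω)) * X j ω a)) P :=
      fun a => (hindep a).integrable_mul (hWint i a) (hWint j a)
    rw [heq, integral_finset_sum _ fun a _ => hmulint a]
    refine Finset.sum_congr rfl fun a _ => ?_
    have := (hindep a).integral_mul_eq_mul_integral (hWint i a).aestronglyMeasurable (hWint j a).aestronglyMeasurable
    rw [hWE i a, hWE j a] at this
    simpa [Pi.mul_apply] using this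
  -- compute E[T]
  set C : ℝ := ∑ a, v a * v a with hCdef
  have hTE : ∫ ω, T ω ∂P = (1 / (n : ℝ)) * ∑ i : Fin n, ∑ j : Fin n,
      (if i = j then (0:ℝ) else C) := by
    have hint : ∀ i j : Fin n, Integrable (fun ω => if i = j then (0:ℝ) else
        (Y i ω - h (Z i ω)) * (Y j ω - h (Z j ω)) * ∑ a, X i ω a * X j ω a) P := by
      intro i j
      by_cases hij : i = j
      · simp [hij]
      · simpa [hij] using hIpair i j hij
    calc ∫ ω, T ω ∂P = ∫ ω, (1 / (n : ℝ)) * ∑ i, ∑ j, (if i = j then (0:ℝ) else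
          (Y i ω - h (Z i ω)) * (Y j ω - h (Z j ω)) * ∑ a, X i ω a * X j ω a) ∂P := by
          exact integral_congr_ae (Filter.Eventually.of_forall fun ω => hT ω)
      _ = (1 / (n : ℝ)) * ∫ ω, ∑ i, ∑ j, (if i = j then (0:ℝ) else
          (Y i ω - h (Z i ω)) * (Y j ω - h (Z j ω)) * ∑ a, X i ω a * X j ω a) ∂P :=
          integral_const_mul _ _
      _ = (1 / (n : ℝ)) * ∑ i : Fin n, ∑ j : Fin n, (if i = j then (0:ℝ) else C) := by
          rw [integral_finset_sum _ fun i _ => integrable_finset_sum _ fun j _ => hint i j]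
          congr 1
          refine Finset.sum_congr rfl fun i _ => ?_
          rw [integral_finset_sum _ fun j _ => hint i j]
          refine Finset.sum_congr rfl fun j _ => ?_
          by_cases hij : i = j
          · simp [hij]
          · simpa [hij] using hC i j hij
  have hrow : ∀ i : Fin n, ∑ j : Fin n, (if i = j then (0:ℝ) else C) = (n : ℝ) * C - C := by
    intro i
    have : ∀ j : Fin n, (if i = j then (0:ℝ) else C) = C - (if i = j then C else 0) := by
      intro j; by_cases hj : i = j <;> simp [hj]
    simp_rw [this, Finset.sum_sub_distrib, Finset.sum_const, Finset.sum_ite_eq,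
      Finset.card_univ, Fintype.card_fin]
    simp [mul_comm]
  have hCfin : ∑ a, (S.mulVec β a + μ a) ^ 2 = C := by
    refine Finset.sum_congr rfl fun a _ => ?_
    rw [← hva a]; ring
  rw [hTE, hCfin]
  simp_rw [hrow, Finset.sum_const, Finset.card_univ, Fintype.card_fin, nsmul_eq_mul]
  have hn0 : (n : ℝ) ≠ 0 := Nat.cast_ne_zero.mpr (by omega)
  field_simp
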